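/- For the multinomial logistic loss, the following identity holds for any Θ, Θ⋆ ∈ ℝ^{K×d}: ℓ_s(Θ⋆) = ℓ_s(Θ) − KL( μ(x_s, Θ⋆), μ(x_s, Θ) ) + ξ_sᵀ (Θ − Θ⋆) x_s, where ξ_s = y_s − μ(x_s, Θ⋆) ∈ ℝ^K and KL(p, q) denotes the KL divergence between the (K+1)-categorical distributions with class probabilities (1−Σ_k p_k, p_1, …, p_K) and (1−Σ_k q_k, q_1, …, q_K). -/

import Mathlib

open scoped RealInnerProductSpace

/-- The multinomial logit probability
`μ_k(x, Θ) = exp(⟨x, θ^{(k)}⟩) / (1 + Σ_j exp(⟨x, θ^{(j)}⟩))`, where `Θ` is given by its rows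
`θ^{(1)}, …, θ^{(K)}`. -/
noncomputable def mnlP {K d : ℕ} (x : EuclideanSpace ℝ (Fin d))
    (Θ : Fin K → EuclideanSpace ℝ (Fin d)) (k : Fin K) : ℝ :=
  Real.exp ⟪x, Θ k⟫ / (1 + ∑ j, Real.exp ⟪x, Θ j⟫)

/-- The multinomial logistic (softmax cross-entropy) loss
`ℓ(Θ) = −Σ_{k=0}^K y_k log μ_k(x, Θ)` with `y_0 = 1 − Σ_k y_k` and `μ_0 = 1 − Σ_j μ_j`. -/
noncomputable def mnlLoss {K d : ℕ} (x : EuclideanSpace ℝ (Fin d)) (y : Fin K → ℝ)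
    (Θ : Fin K → EuclideanSpace ℝ (Fin d)) : ℝ :=
  -((1 - ∑ k, y k) * Real.log (1 - ∑ j, mnlP x Θ j)) - ∑ k, y k * Real.log (mnlP x Θ k)

/-- KL divergence between the `(K+1)`-categorical distributions with class probabilities
`(1 − Σ_k p_k, p_1, …, p_K)` and `(1 − Σ_k q_k, q_1, …, q_K)`. -/
noncomputable def klCat {K : ℕ} (p q : Fin K → ℝ) : ℝ :=
  (1 - ∑ k, p k) * Real.log ((1 - ∑ k, p k) / (1 - ∑ k, q k))
    + ∑ k, p k * Real.log (p k / q k)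

noncomputable def crossEntropyCat {K : ℕ} (y p : Fin K → ℝ) : ℝ :=
  -((1 - ∑ k, y k) * Real.log (1 - ∑ k, p k)) - ∑ k, y k * Real.log (p k)

/- With `r_k = log (p_k / q_k)` for `k = 0, …, K`, the difference of cross entropies is
`−Σ y_k r_k = −KL(p, q) + Σ (p_k − y_k) r_k`; as `Σ_{k=0}^K (p_k − y_k) = 0`, the `k = 0`
term is absorbed by replacing `r_k` with `r_k − r_0`, a difference of log-odds. -/
theorem crossEntropyCat_eq_sub_klCat_add {K : ℕ} (y p q : Fin K → ℝ)
    (hp : ∀ k, p k ≠ 0) (hq : ∀ k, q k ≠ 0)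
    (hp₀ : 1 - ∑ k, p k ≠ 0) (hq₀ : 1 - ∑ k, q k ≠ 0) :
    crossEntropyCat y p =
      crossEntropyCat y q - klCat p q
        + ∑ k, (y k - p k) *
            (Real.log (q k / (1 - ∑ j, q j)) - Real.log (p k / (1 - ∑ j, p j))) := by
  unfold crossEntropyCat klCat
  simp only [Real.log_div (hp _) hp₀, Real.log_div (hq _) hq₀, Real.log_div (hp _) (hq _),
    Real.log_div hp₀ hq₀, mul_sub, sub_mul, Finset.sum_sub_distrib, ← Finset.sum_mul]
  ring

section MNL

variable {K d : ℕ} (x : EuclideanSpace ℝ (Fin d)) (Θ : Fin K → EuclideanSpace ℝ (Fin d))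

theorem mnlLoss_eq_crossEntropyCat (y : Fin K → ℝ) :
    mnlLoss x y Θ = crossEntropyCat y (mnlP x Θ) := rfl

theorem mnlP_pos (k : Fin K) : 0 < mnlP x Θ k := by
  unfold mnlP
  positivity

theorem one_sub_sum_mnlP : 1 - ∑ j, mnlP x Θ j = (1 + ∑ j, Real.exp ⟪x, Θ j⟫)⁻¹ := by
  have hS : 1 + ∑ j, Real.exp ⟪x, Θ j⟫ ≠ 0 := by positivity
  simp only [mnlP, ← Finset.sum_div]
  field_simp
  ring

theorem one_sub_sum_mnlP_pos : 0 < 1 - ∑ j, mnlP x Θ j := by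
  rw [one_sub_sum_mnlP]
  positivity

theorem log_mnlP_div_one_sub_sum (k : Fin K) :
    Real.log (mnlP x Θ k / (1 - ∑ j, mnlP x Θ j)) = ⟪x, Θ k⟫ := by
  have hS : 1 + ∑ j, Real.exp ⟪x, Θ j⟫ ≠ 0 := by positivity
  rw [one_sub_sum_mnlP, mnlP, div_inv_eq_mul, div_mul_cancel₀ _ hS, Real.log_exp]

end MNL

theorem stmt_10_general {K d : ℕ} (x : EuclideanSpace ℝ (Fin d))
    (y : Fin K → ℝ)
    (Θstar Θ : Fin K → EuclideanSpace ℝ (Fin d)) :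
    mnlLoss x y Θstar =
      mnlLoss x y Θ - klCat (fun k => mnlP x Θstar k) (fun k => mnlP x Θ k)
        + ∑ k, (y k - mnlP x Θstar k) * ⟪x, Θ k - Θstar k⟫ := by
  rw [mnlLoss_eq_crossEntropyCat, mnlLoss_eq_crossEntropyCat,
    crossEntropyCat_eq_sub_klCat_add y _ _ (fun k => (mnlP_pos x Θstar k).ne')
      (fun k => (mnlP_pos x Θ k).ne') (one_sub_sum_mnlP_pos x Θstar).ne'
      (one_sub_sum_mnlP_pos x Θ).ne']
  simp only [log_mnlP_div_one_sub_sum, inner_sub_right]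

/-- decomposition of the multinomial logistic loss at the true parameter:
`ℓ_s(Θ⋆) = ℓ_s(Θ) − KL(μ(x_s, Θ⋆), μ(x_s, Θ)) + ξ_sᵀ (Θ − Θ⋆) x_s` with
`ξ_s = y_s − μ(x_s, Θ⋆)`. -/
theorem stmt_10 {K d : ℕ} (x : EuclideanSpace ℝ (Fin d))
    (y : Fin K → ℝ) (hy : ∀ k, y k = 0 ∨ y k = 1) (hy1 : ∑ k, y k ≤ 1)
    (Θstar Θ : Fin K → EuclideanSpace ℝ (Fin d)) :
    mnlLoss x y Θstar =
      mnlLoss x y Θ - klCat (fun k => mnlP x Θstar k) (fun k => mnlP x Θ k)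
        + ∑ k, (y k - mnlP x Θstar k) * ⟪x, Θ k - Θstar k⟫ :=
  stmt_10_general x y Θstar Θ
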